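/- arXiv:1007.3315 — 4 statements merged into one kernel-verified Lean document; each statement's English description precedes it below -/
import Mathlib

section
/- Matrix inversion lemma application: for B of full row rank, G a compatible matrix, and λ > 0, one has B*(λ⁻¹ B G G* B* + B B*)⁻¹ B restricted along a channel vector g satisfies g* B* (λ⁻¹ B G G* B* + B B*)⁻¹ B g = y − (λ + y)⁻¹ · (g* B*(BB*)⁻¹ B G G* B*(BB*)⁻¹ B g) when G* B*(BB*)⁻¹ B G = y I and g is the first column of G, where y = g* B*(BB*)⁻¹ B g; in this case the expression simplifies to λ y/(λ + y). -/
open Matrix ComplexOrder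

/-! With `A = B Bᴴ` and `P = B G`, the hypothesis says `Pᴴ A⁻¹ P = y I`. Hence
`M = λ⁻¹ P Pᴴ + A` maps `A⁻¹ B g = A⁻¹ P e₀` to `(1 + y / λ) B g`, so
`M⁻¹ B g = (1 + y / λ)⁻¹ A⁻¹ B g` and the quadratic form equals
`(1 + y / λ)⁻¹ y = λ y / (λ + y)`.
`M` is invertible as the sum of the positive definite `A` (full row rank of `B`) and a
positive semidefinite matrix. -/

namespace Matrix

variable {m n k : Type*} [Fintype m] [Fintype n] [Fintype k] [DecidableEq m]

theorem isUnit_of_rank_eq_card {K : Type*} [Field K] {A : Matrix m m K}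
    (h : A.rank = Fintype.card m) : IsUnit A := by
  rw [← mulVec_surjective_iff_isUnit, ← coe_mulVecLin, ← LinearMap.range_eq_top]
  apply Submodule.eq_top_of_finrank_eq
  rw [← rank, h, Module.finrank_fintype_fun_eq_card]

theorem posDef_self_mul_conjTranspose_of_rank_eq_card {𝕜 : Type*} [RCLike 𝕜]
    {B : Matrix m n 𝕜} (h : B.rank = Fintype.card m) : (B * Bᴴ).PosDef :=
  (posSemidef_self_mul_conjTranspose B).posDef_iff_isUnit.mpr
    (isUnit_of_rank_eq_card (by rw [rank_self_mul_conjTranspose, h]))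

theorem smul_mul_add_mulVec_nonsing_inv_mulVec {R : Type*} [CommRing R] {A : Matrix m m R}
    (hA : IsUnit A.det) (P : Matrix m k R) (Q : Matrix k m R) (c y : R) {w : k → R}
    (hw : (Q * A⁻¹ * P) *ᵥ w = y • w) :
    (c • (P * Q) + A) *ᵥ (A⁻¹ *ᵥ (P *ᵥ w)) = (1 + c * y) • (P *ᵥ w) := by
  have hPQ : (P * Q) *ᵥ (A⁻¹ *ᵥ (P *ᵥ w)) = y • (P *ᵥ w) := by
    rw [mulVec_mulVec, mulVec_mulVec,
      show P * Q * A⁻¹ * P = P * (Q * A⁻¹ * P) by simp only [Matrix.mul_assoc],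
      ← mulVec_mulVec, hw, mulVec_smul]
  rw [add_mulVec, smul_mulVec, hPQ, mulVec_mulVec, mul_nonsing_inv _ hA, one_mulVec, smul_smul,
    add_smul, one_smul, add_comm]

theorem nonsing_inv_mulVec_eq_of_mulVec_eq_smul {K : Type*} [Field K] {M : Matrix m m K}
    (hM : IsUnit M.det) {u v : m → K} {s : K} (hs : s ≠ 0) (h : M *ᵥ v = s • u) :
    M⁻¹ *ᵥ u = s⁻¹ • v := by
  rw [show u = s⁻¹ • M *ᵥ v by rw [h, inv_smul_smul₀ hs], mulVec_smul, mulVec_mulVec,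
    nonsing_inv_mul _ hM, one_mulVec]

end Matrix

/-- Matrix inversion lemma application: let `B` be `m × n` of full row rank,
`G` an `n × 2` matrix with first column `g`, and `λ > 0`.  Set
`y = gᴴ Bᴴ (B Bᴴ)⁻¹ B g`.  If `Gᴴ Bᴴ (B Bᴴ)⁻¹ B G = y · I₂`, then
`gᴴ Bᴴ (λ⁻¹ B G Gᴴ Bᴴ + B Bᴴ)⁻¹ B g = λ y / (λ + y)`. -/
theorem matrix_inversion_lemma_snr (m n : ℕ)
    (B : Matrix (Fin m) (Fin n) ℂ) (hB : B.rank = m)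
    (G : Matrix (Fin n) (Fin 2) ℂ) (lam : ℝ) (hlam : 0 < lam)
    (g : Fin n → ℂ) (hg : g = fun i => G i 0)
    (y : ℝ)
    (hy : (y : ℂ) = star (B.mulVec g) ⬝ᵥ (B * Bᴴ)⁻¹.mulVec (B.mulVec g))
    (hGy : Gᴴ * Bᴴ * (B * Bᴴ)⁻¹ * B * G = (y : ℂ) • (1 : Matrix (Fin 2) (Fin 2) ℂ)) :
    star (B.mulVec g) ⬝ᵥ
        (((lam : ℂ))⁻¹ • (B * G * Gᴴ * Bᴴ) + B * Bᴴ)⁻¹.mulVec (B.mulVec g) =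
      ((lam * y / (lam + y) : ℝ) : ℂ) := by
  set A := B * Bᴴ
  set P := B * G
  have hA : A.PosDef := posDef_self_mul_conjTranspose_of_rank_eq_card (by simpa using hB)
  have hy0 : 0 ≤ y := by
    have h := hA.inv.posSemidef.dotProduct_mulVec_nonneg (B *ᵥ g)
    rw [← hy] at h
    exact_mod_cast h
  have hPP : B * G * Gᴴ * Bᴴ = P * Pᴴ := by simp only [P, conjTranspose_mul, Matrix.mul_assoc]
  have hM : ((lam : ℂ)⁻¹ • (P * Pᴴ) + A).PosDef :=
    .posSemidef_add ((posSemidef_self_mul_conjTranspose P).smul (by positivity)) hA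
  have hu : B *ᵥ g = P *ᵥ Pi.single 0 1 := by
    rw [hg, ← mulVec_mulVec, mulVec_single_one]; rfl
  have hcol : (Pᴴ * A⁻¹ * P) *ᵥ Pi.single 0 1 = (y : ℂ) • Pi.single 0 1 := by
    simp only [P, conjTranspose_mul, ← Matrix.mul_assoc, hGy, smul_mulVec, one_mulVec]
  have hs : (1 + (lam : ℂ)⁻¹ * y) ≠ 0 := by positivity
  have hMv := smul_mul_add_mulVec_nonsing_inv_mulVec
    ((isUnit_iff_isUnit_det A).mp hA.isUnit) P Pᴴ (lam : ℂ)⁻¹ y hcol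
  rw [hPP, hu, nonsing_inv_mulVec_eq_of_mulVec_eq_smul
    ((isUnit_iff_isUnit_det _).mp hM.isUnit) hs hMv, dotProduct_smul, ← hu, ← hy]
  have hly : (lam : ℂ) + y ≠ 0 := by exact_mod_cast (by positivity : lam + y ≠ 0)
  push_cast
  rw [smul_eq_mul]
  field_simp
end

section
/- If X and Y are independent nonnegative random variables with P(X < ε) = Θ(ε^{d₁}) and P(Y < ε) = Θ(ε^{d₂}) as ε → 0⁺, then the scaled harmonic mean Z = XY/(X + cY) (for fixed c > 0) satisfies P(Z < ε) = Θ(ε^{min(d₁,d₂)}); i.e., Z has diversity gain min(d₁, d₂). -/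
open MeasureTheory ProbabilityTheory Filter Set

/-- `W` has outage probability `Θ(ε^d)` as `ε → 0⁺`. -/
def OutageTheta {Ω : Type*} [MeasureSpace Ω] (W : Ω → ℝ) (d : ℝ) : Prop :=
  ∃ C₁ C₂ : ℝ, 0 < C₁ ∧ 0 < C₂ ∧
    ∀ᶠ ε in nhdsWithin (0 : ℝ) (Ioi 0),
      C₁ * ε ^ d ≤ (ℙ {ω | W ω < ε}).toReal ∧
      (ℙ {ω | W ω < ε}).toReal ≤ C₂ * ε ^ d

/-! Both bounds of `Z` come from the sandwich `min X Y / (1 + c) ≤ Z ≤ min (X / c) Y`: the upper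
inequality gives `{X < c ε} ∪ {Y < ε} ⊆ {Z < ε}`, the lower one `{Z < ε} ⊆ {X < (1 + c) ε} ∪
{Y < (1 + c) ε}`, and a union bound finishes. -/

open Topology

noncomputable def scaledHarmonicMean (c x y : ℝ) : ℝ := x * y / (x + c * y)

section ScaledHarmonicMean

variable {c x y : ℝ}

theorem scaledHarmonicMean_le_inv_mul_left (hc : 0 < c) (hx : 0 ≤ x) (hy : 0 ≤ y) :
    scaledHarmonicMean c x y ≤ c⁻¹ * x := by
  rcases (add_nonneg hx (mul_nonneg hc.le hy)).eq_or_lt with h | h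
  · simp only [scaledHarmonicMean, ← h, div_zero]
    positivity
  · rw [scaledHarmonicMean, div_le_iff₀ h]
    calc x * y = c⁻¹ * x * (c * y) := by field_simp
      _ ≤ c⁻¹ * x * (x + c * y) := by gcongr; linarith

theorem scaledHarmonicMean_le_right (hc : 0 < c) (hx : 0 ≤ x) (hy : 0 ≤ y) :
    scaledHarmonicMean c x y ≤ y := by
  rcases (add_nonneg hx (mul_nonneg hc.le hy)).eq_or_lt with h | h
  · simpa only [scaledHarmonicMean, ← h, div_zero] using hy
  · rw [scaledHarmonicMean, div_le_iff₀ h]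
    nlinarith [mul_nonneg hc.le (mul_nonneg hy hy)]

theorem inv_one_add_mul_min_le_scaledHarmonicMean (hc : 0 < c) (hx : 0 ≤ x) (hy : 0 ≤ y) :
    (1 + c)⁻¹ * min x y ≤ scaledHarmonicMean c x y := by
  rcases (add_nonneg hx (mul_nonneg hc.le hy)).eq_or_lt with h | h
  · have hx0 : x = 0 := by nlinarith [mul_nonneg hc.le hy]
    simp [scaledHarmonicMean, hx0, min_eq_left hy]
  · rw [scaledHarmonicMean, le_div_iff₀ h, inv_mul_eq_div, div_mul_eq_mul_div,
      div_le_iff₀ (by linarith)]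
    nlinarith [mul_le_mul_of_nonneg_left (min_le_right x y) hx,
      mul_le_mul_of_nonneg_left (min_le_left x y) (mul_nonneg hc.le hy)]

end ScaledHarmonicMean

section Outage

variable {Ω : Type*} [MeasureSpace Ω]

def OutageLowerBound (W : Ω → ℝ) (d : ℝ) : Prop :=
  ∃ C : ℝ, 0 < C ∧ ∀ᶠ ε in 𝓝[>] 0, C * ε ^ d ≤ (ℙ {ω | W ω < ε}).toReal

def OutageUpperBound (W : Ω → ℝ) (d : ℝ) : Prop :=
  ∃ C : ℝ, 0 < C ∧ ∀ᶠ ε in 𝓝[>] 0, (ℙ {ω | W ω < ε}).toReal ≤ C * ε ^ d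

variable {W V : Ω → ℝ} {d d' : ℝ}

theorem outageTheta_iff : OutageTheta W d ↔ OutageLowerBound W d ∧ OutageUpperBound W d :=
  ⟨fun ⟨C₁, C₂, h₁, h₂, h⟩ =>
    ⟨⟨C₁, h₁, h.mono fun _ => And.left⟩, ⟨C₂, h₂, h.mono fun _ => And.right⟩⟩,
   fun ⟨⟨C₁, h₁, hl⟩, ⟨C₂, h₂, hu⟩⟩ => ⟨C₁, C₂, h₁, h₂, hl.and hu⟩⟩

theorem OutageTheta.const_mul (h : OutageTheta W d) {k : ℝ} (hk : 0 < k) :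
    OutageTheta (fun ω => k * W ω) d := by
  obtain ⟨C₁, C₂, h₁, h₂, hW⟩ := h
  refine ⟨C₁ * k⁻¹ ^ d, C₂ * k⁻¹ ^ d, by positivity, by positivity, ?_⟩
  filter_upwards [eventually_nhdsGT_zero_mul_left (inv_pos.2 hk) hW, self_mem_nhdsWithin]
    with ε hε (hε0 : 0 < ε)
  have hset : {ω | k * W ω < ε} = {ω | W ω < k⁻¹ * ε} := by
    ext ω
    exact (lt_inv_mul_iff₀ hk).symm
  rwa [hset, mul_assoc, mul_assoc, ← Real.mul_rpow (by positivity) hε0.le]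

theorem OutageLowerBound.mono_of_le [IsFiniteMeasure (ℙ : Measure Ω)]
    (h : OutageLowerBound V d) (hle : ∀ ω, W ω ≤ V ω) : OutageLowerBound W d := by
  obtain ⟨C, hC, hV⟩ := h
  refine ⟨C, hC, hV.mono fun ε hε => hε.trans ?_⟩
  exact ENNReal.toReal_mono (measure_ne_top _ _)
    (measure_mono fun ω (hω : V ω < ε) => (hle ω).trans_lt hω)

theorem OutageUpperBound.of_exponent_le (h : OutageUpperBound W d) (hd : d' ≤ d) :
    OutageUpperBound W d' := by
  obtain ⟨C, hC, hW⟩ := h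
  refine ⟨C, hC, ?_⟩
  filter_upwards [hW, Ioo_mem_nhdsGT (zero_lt_one' ℝ)] with ε hε hε01
  exact hε.trans (mul_le_mul_of_nonneg_left
    (Real.rpow_le_rpow_of_exponent_ge hε01.1 hε01.2.le hd) hC.le)

theorem OutageUpperBound.of_min_le [IsFiniteMeasure (ℙ : Measure Ω)] {U : Ω → ℝ}
    (hU : OutageUpperBound U d) (hV : OutageUpperBound V d) (hle : ∀ ω, min (U ω) (V ω) ≤ W ω) :
    OutageUpperBound W d := by
  obtain ⟨C₁, h₁, hU⟩ := hU
  obtain ⟨C₂, h₂, hV⟩ := hV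
  refine ⟨C₁ + C₂, add_pos h₁ h₂, ?_⟩
  filter_upwards [hU, hV] with ε hUε hVε
  have hsub : {ω | W ω < ε} ⊆ {ω | U ω < ε} ∪ {ω | V ω < ε} := fun ω (hω : W ω < ε) =>
    min_lt_iff.1 ((hle ω).trans_lt hω)
  calc (ℙ {ω | W ω < ε}).toReal
      ≤ (ℙ {ω | U ω < ε}).toReal + (ℙ {ω | V ω < ε}).toReal :=
        (measureReal_mono hsub).trans (measureReal_union_le _ _)
    _ ≤ (C₁ + C₂) * ε ^ d := by linarith

end Outage

theorem harmonic_mean_diversity_general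
    {Ω : Type*} [MeasureSpace Ω] [IsProbabilityMeasure (ℙ : Measure Ω)]
    (X Y : Ω → ℝ)
    (hXpos : ∀ ω, 0 ≤ X ω) (hYpos : ∀ ω, 0 ≤ Y ω)
    (d₁ d₂ : ℝ)
    (hXd : OutageTheta X d₁) (hYd : OutageTheta Y d₂)
    (c : ℝ) (hc : 0 < c)
    (Z : Ω → ℝ)
    (hZ : ∀ ω, Z ω = if X ω + c * Y ω = 0 then 0
      else X ω * Y ω / (X ω + c * Y ω)) :
    OutageTheta Z (min d₁ d₂) := by
  have hZ' : ∀ ω, Z ω = scaledHarmonicMean c (X ω) (Y ω) := fun ω => by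
    rw [hZ, scaledHarmonicMean, ite_eq_right_iff]
    intro h
    rw [h, div_zero]
  have hXc := outageTheta_iff.1 (hXd.const_mul (inv_pos.2 hc))
  have hX1c := outageTheta_iff.1 (hXd.const_mul (inv_pos.2 (by positivity : (0 : ℝ) < 1 + c)))
  have hY1c := outageTheta_iff.1 (hYd.const_mul (inv_pos.2 (by positivity : (0 : ℝ) < 1 + c)))
  refine outageTheta_iff.2 ⟨?_, ?_⟩
  · rcases min_choice d₁ d₂ with h | h <;> rw [h]
    · exact hXc.1.mono_of_le fun ω => (hZ' ω).trans_le
        (scaledHarmonicMean_le_inv_mul_left hc (hXpos ω) (hYpos ω))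
    · exact (outageTheta_iff.1 hYd).1.mono_of_le fun ω => (hZ' ω).trans_le
        (scaledHarmonicMean_le_right hc (hXpos ω) (hYpos ω))
  · refine (hX1c.2.of_exponent_le (min_le_left _ _)).of_min_le
      (hY1c.2.of_exponent_le (min_le_right _ _)) fun ω => ?_
    rw [hZ', ← mul_min_of_nonneg _ _ (by positivity)]
    exact inv_one_add_mul_min_le_scaledHarmonicMean hc (hXpos ω) (hYpos ω)

/-- If `X, Y` are independent nonnegative random variables with
`P(X < ε) = Θ(ε^{d₁})` and `P(Y < ε) = Θ(ε^{d₂})`, then the scaled harmonic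
mean `Z = X Y / (X + c Y)` (with `Z = 0` when `X + c Y = 0`) satisfies
`P(Z < ε) = Θ(ε^{min(d₁, d₂)})`, i.e. `Z` has diversity gain `min(d₁, d₂)`. -/
theorem harmonic_mean_diversity
    {Ω : Type*} [MeasureSpace Ω] [IsProbabilityMeasure (ℙ : Measure Ω)]
    (X Y : Ω → ℝ) (hX : Measurable X) (hY : Measurable Y)
    (hXpos : ∀ ω, 0 ≤ X ω) (hYpos : ∀ ω, 0 ≤ Y ω)
    (hindep : IndepFun X Y ℙ)
    (d₁ d₂ : ℝ) (hd₁ : 0 < d₁) (hd₂ : 0 < d₂)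
    (hXd : OutageTheta X d₁) (hYd : OutageTheta Y d₂)
    (c : ℝ) (hc : 0 < c)
    (Z : Ω → ℝ)
    (hZ : ∀ ω, Z ω = if X ω + c * Y ω = 0 then 0
      else X ω * Y ω / (X ω + c * Y ω)) :
    OutageTheta Z (min d₁ d₂) :=
  harmonic_mean_diversity_general X Y hXpos hYpos d₁ d₂ hXd hYd c hc Z hZ
end

section
/- If X, Y, Z are nonnegative random variables with Y, Z independent and each having diversity gain d, then Y + Z has diversity gain 2d; consequently, if X has diversity gain d₁ and is independent of (Y, Z), then XY/(X+cY) + XZ/(X+cZ) has diversity gain min(d₁, 2d) under the assumption that Y and Z have densities with P(Y < ε) = Θ(ε^d) and P(Z < ε) = Θ(ε^d). -/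
/-!
On a logarithmic scale small probabilities compose simply: if `log p / log ε → d` and
`log q / log ε → e` as `ε → 0⁺`, then `p q` has order `d + e`, `max p q` (hence also `p + q`)
has order `min d e`, and rescaling `ε` by a constant does not change the order.

By independence, `P(Y + Z < ε)` lies between `P(Y < ε/2) P(Z < ε/2)` and `P(Y < ε) P(Z < ε)`,
so it has order `2d`. The term `X Y / (X + c Y)` is the parallel sum of `X / c` and `Y`; hence
it is at most each of them and at least `min X Y / (1 + c)`. So, for the sum `W` of the two
terms, `P(W < ε)` is at least `max (P(X < c ε / 2)) (P(Y + Z < ε))` and at most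
`P(X < (1 + c) ε) + P(Y < (1 + c) ε) P(Z < (1 + c) ε)`, and both bounds have order `min d₁ (2d)`.
-/

open MeasureTheory ProbabilityTheory Filter Set

/-- `W` has diversity gain `d`: `lim_{ε→0⁺} log P(W < ε) / log ε = d`. -/
def DiversityGain {Ω : Type*} [MeasureSpace Ω] (W : Ω → ℝ) (d : ℝ) : Prop :=
  Tendsto (fun ε : ℝ => Real.log ((ℙ {ω | W ω < ε}).toReal) / Real.log ε)
    (nhdsWithin 0 (Ioi 0)) (nhds d)

open Real Topology

def HasLogOrder (p : ℝ → ℝ) (d : ℝ) : Prop :=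
  Tendsto (fun ε => log (p ε) / log ε) (𝓝[>] 0) (𝓝 d)

lemma eventually_log_neg_nhdsGT_zero : ∀ᶠ ε in 𝓝[>] (0 : ℝ), log ε < 0 := by
  filter_upwards [Ioo_mem_nhdsGT one_pos] with ε hε using log_neg hε.1 hε.2

lemma tendsto_const_mul_nhdsGT_zero {k : ℝ} (hk : 0 < k) :
    Tendsto (fun ε : ℝ => k * ε) (𝓝[>] 0) (𝓝[>] 0) :=
  tendsto_nhdsWithin_of_tendsto_nhds_of_eventually_within _
    ((continuous_const_mul k).tendsto' 0 0 (mul_zero k) |>.mono_left nhdsWithin_le_nhds)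
    (eventually_mem_nhdsWithin.mono fun _ hε => mul_pos hk hε)

lemma hasLogOrder_const (C : ℝ) : HasLogOrder (fun _ => C) 0 :=
  tendsto_const_nhds.div_atBot tendsto_log_nhdsGT_zero

lemma hasLogOrder_rpow (e : ℝ) : HasLogOrder (fun ε => ε ^ e) e := by
  refine tendsto_const_nhds.congr' ?_
  filter_upwards [self_mem_nhdsWithin, eventually_log_neg_nhdsGT_zero] with ε hε hlog
  rw [log_rpow hε, mul_div_cancel_right₀ _ hlog.ne]

namespace HasLogOrder

variable {p q : ℝ → ℝ} {d e : ℝ}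

lemma eventually_pos (h : HasLogOrder p d) (hd : d ≠ 0) (hp : ∀ ε, 0 ≤ p ε) :
    ∀ᶠ ε in 𝓝[>] 0, 0 < p ε := by
  filter_upwards [h.eventually_ne hd] with ε hε
  refine (hp ε).lt_of_ne fun hp0 => hε ?_
  rw [← hp0, log_zero, zero_div]

lemma mul (hp : HasLogOrder p d) (hq : HasLogOrder q e)
    (hp0 : ∀ᶠ ε in 𝓝[>] 0, 0 < p ε) (hq0 : ∀ᶠ ε in 𝓝[>] 0, 0 < q ε) :
    HasLogOrder (fun ε => p ε * q ε) (d + e) := by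
  refine (Tendsto.add hp hq).congr' ?_
  filter_upwards [hp0, hq0] with ε hpε hqε
  rw [log_mul hpε.ne' hqε.ne', add_div]

lemma const_mul (h : HasLogOrder p d) {K : ℝ} (hK : 0 < K)
    (hp0 : ∀ᶠ ε in 𝓝[>] 0, 0 < p ε) :
    HasLogOrder (fun ε => K * p ε) d := by
  simpa using (hasLogOrder_const K).mul h (.of_forall fun _ => hK) hp0

lemma _root_.hasLogOrder_const_mul_rpow {K : ℝ} (hK : 0 < K) (e : ℝ) :
    HasLogOrder (fun ε => K * ε ^ e) e :=
  (hasLogOrder_rpow e).const_mul hK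
    (eventually_mem_nhdsWithin.mono fun _ hε => rpow_pos_of_pos hε e)

lemma comp_const_mul (h : HasLogOrder p d) {k : ℝ} (hk : 0 < k) :
    HasLogOrder (fun ε => p (k * ε)) d := by
  have hscale := tendsto_const_mul_nhdsGT_zero hk
  have hk1 : HasLogOrder (fun ε => k * ε) 1 := by
    simpa using hasLogOrder_const_mul_rpow hk 1
  have hprod := Tendsto.mul (h.comp hscale) hk1
  rw [mul_one] at hprod
  refine hprod.congr' ?_
  filter_upwards [hscale.eventually eventually_log_neg_nhdsGT_zero] with ε hlog
  exact div_mul_div_cancel₀ hlog.ne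

lemma of_le_of_le {f g : ℝ → ℝ} (hf : HasLogOrder f d) (hg : HasLogOrder g d)
    (hf0 : ∀ᶠ ε in 𝓝[>] 0, 0 < f ε) (hfp : ∀ᶠ ε in 𝓝[>] 0, f ε ≤ p ε)
    (hpg : ∀ᶠ ε in 𝓝[>] 0, p ε ≤ g ε) : HasLogOrder p d := by
  refine tendsto_of_tendsto_of_tendsto_of_le_of_le' hg hf ?_ ?_ <;>
    filter_upwards [hf0, hfp, hpg, eventually_log_neg_nhdsGT_zero] with ε hfε hfpε hpgε hlog
  · exact div_le_div_of_nonpos_of_le hlog.le (log_le_log (hfε.trans_le hfpε) hpgε)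
  · exact div_le_div_of_nonpos_of_le hlog.le (log_le_log hfε hfpε)

lemma max (hp : HasLogOrder p d) (hq : HasLogOrder q e)
    (hp0 : ∀ᶠ ε in 𝓝[>] 0, 0 < p ε) (hq0 : ∀ᶠ ε in 𝓝[>] 0, 0 < q ε) :
    HasLogOrder (fun ε => max (p ε) (q ε)) (min d e) := by
  refine (hp.min hq).congr' ?_
  filter_upwards [hp0, hq0, eventually_log_neg_nhdsGT_zero] with ε hpε hqε hlog
  rcases le_total (p ε) (q ε) with h | h
  · rw [max_eq_right h, min_eq_right (div_le_div_of_nonpos_of_le hlog.le (log_le_log hpε h))]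
  · rw [max_eq_left h, min_eq_left (div_le_div_of_nonpos_of_le hlog.le (log_le_log hqε h))]

end HasLogOrder

noncomputable def harmonicTerm (c x y : ℝ) : ℝ :=
  if x + c * y = 0 then 0 else x * y / (x + c * y)

section harmonicTerm

variable {c x y : ℝ}

lemma harmonicTerm_nonneg (hc : 0 ≤ c) (hx : 0 ≤ x) (hy : 0 ≤ y) :
    0 ≤ harmonicTerm c x y := by
  unfold harmonicTerm
  split_ifs
  exacts [le_rfl, by positivity]

lemma harmonicTerm_le_div (hc : 0 < c) (hx : 0 ≤ x) (hy : 0 ≤ y) :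
    harmonicTerm c x y ≤ x / c := by
  unfold harmonicTerm
  split_ifs with h
  · positivity
  · rw [div_le_div_iff₀ (by positivity) hc]
    nlinarith [mul_nonneg hx hy]

lemma harmonicTerm_le_right (hc : 0 ≤ c) (hx : 0 ≤ x) (hy : 0 ≤ y) :
    harmonicTerm c x y ≤ y := by
  unfold harmonicTerm
  split_ifs with h
  · exact hy
  · rw [div_le_iff₀ (by positivity)]
    nlinarith [mul_nonneg hc (mul_nonneg hy hy)]

lemma min_div_le_harmonicTerm (hc : 0 ≤ c) (hx : 0 ≤ x) (hy : 0 ≤ y) :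
    min x y / (1 + c) ≤ harmonicTerm c x y := by
  unfold harmonicTerm
  split_ifs with h
  · have hx0 : x = 0 := by nlinarith [mul_nonneg hc hy]
    simp [hx0, hy]
  · have hxy : 0 < x + c * y := (by positivity : (0:ℝ) ≤ x + c * y).lt_of_ne' h
    rw [div_le_div_iff₀ (by positivity) hxy]
    rcases le_total x y with hle | hle
    · rw [min_eq_left hle]
      nlinarith [mul_nonneg hx (sub_nonneg.2 hle)]
    · rw [min_eq_right hle]
      nlinarith [mul_nonneg hc (mul_nonneg hy (sub_nonneg.2 hle))]

end harmonicTerm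

section outage

variable {Ω : Type*} [MeasureSpace Ω]

def outageProb (W : Ω → ℝ) (ε : ℝ) : ℝ := (ℙ : Measure Ω).real {ω | W ω < ε}

lemma diversityGain_iff_hasLogOrder {W : Ω → ℝ} {d : ℝ} :
    DiversityGain W d ↔ HasLogOrder (outageProb W) d := Iff.rfl

lemma outageProb_nonneg (W : Ω → ℝ) (ε : ℝ) : 0 ≤ outageProb W ε := measureReal_nonneg

lemma eventually_outageProb_const_mul_pos {W : Ω → ℝ} {d : ℝ}
    (h : HasLogOrder (outageProb W) d) (hd : 0 < d) {k : ℝ} (hk : 0 < k) :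
    ∀ᶠ ε in 𝓝[>] 0, 0 < outageProb W (k * ε) :=
  (h.comp_const_mul hk).eventually_pos hd.ne' fun _ => outageProb_nonneg _ _

lemma OutageTheta.diversityGain {W : Ω → ℝ} {d : ℝ} (h : OutageTheta W d) :
    DiversityGain W d := by
  obtain ⟨C₁, C₂, hC₁, hC₂, hbounds⟩ := h
  exact (hasLogOrder_const_mul_rpow hC₁ d).of_le_of_le (hasLogOrder_const_mul_rpow hC₂ d)
    (eventually_mem_nhdsWithin.mono fun _ hε => mul_pos hC₁ (rpow_pos_of_pos hε d))
    (hbounds.mono fun _ h => h.1) (hbounds.mono fun _ h => h.2)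

lemma ProbabilityTheory.IndepFun.measureReal_lt_inter_lt {Y Z : Ω → ℝ} (hYZ : IndepFun Y Z ℙ)
    (s t : ℝ) :
    (ℙ : Measure Ω).real ({ω | Y ω < s} ∩ {ω | Z ω < t}) = outageProb Y s * outageProb Z t := by
  simp only [outageProb, measureReal_def, ← ENNReal.toReal_mul]
  exact congrArg ENNReal.toReal
    (hYZ.measure_inter_preimage_eq_mul _ _ measurableSet_Iio measurableSet_Iio)

variable [IsFiniteMeasure (ℙ : Measure Ω)]

lemma outageProb_le_of_imp {V W : Ω → ℝ} {δ ε : ℝ} (h : ∀ ω, W ω < ε → V ω < δ) :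
    outageProb W ε ≤ outageProb V δ :=
  measureReal_mono h

variable {Y Z : Ω → ℝ}

lemma outageProb_mul_le_outageProb_add (hYZ : IndepFun Y Z ℙ) {s t ε : ℝ}
    (hst : s + t ≤ ε) : outageProb Y s * outageProb Z t ≤ outageProb (fun ω => Y ω + Z ω) ε := by
  rw [← hYZ.measureReal_lt_inter_lt]
  exact measureReal_mono fun ω ⟨hY, hZ⟩ => by
    simp only [mem_ofPred_eq] at hY hZ ⊢
    linarith

lemma outageProb_add_le_mul (hYZ : IndepFun Y Z ℙ) (hY0 : ∀ ω, 0 ≤ Y ω) (hZ0 : ∀ ω, 0 ≤ Z ω)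
    (ε : ℝ) : outageProb (fun ω => Y ω + Z ω) ε ≤ outageProb Y ε * outageProb Z ε := by
  rw [← hYZ.measureReal_lt_inter_lt]
  exact measureReal_mono fun ω (h : Y ω + Z ω < ε) =>
    ⟨show Y ω < ε by linarith [hZ0 ω], show Z ω < ε by linarith [hY0 ω]⟩

theorem DiversityGain.add_of_indepFun {d e : ℝ} (hY : DiversityGain Y d)
    (hZ : DiversityGain Z e) (hd : 0 < d) (he : 0 < e) (hYZ : IndepFun Y Z ℙ)
    (hY0 : ∀ ω, 0 ≤ Y ω) (hZ0 : ∀ ω, 0 ≤ Z ω) :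
    DiversityGain (fun ω => Y ω + Z ω) (d + e) := by
  rw [diversityGain_iff_hasLogOrder] at *
  have hY0' := hY.eventually_pos hd.ne' (outageProb_nonneg Y)
  have hZ0' := hZ.eventually_pos he.ne' (outageProb_nonneg Z)
  have hYhalf := HasLogOrder.comp_const_mul hY (k := 2⁻¹) (by norm_num)
  have hZhalf := HasLogOrder.comp_const_mul hZ (k := 2⁻¹) (by norm_num)
  have hYhalf0 := eventually_outageProb_const_mul_pos hY hd (k := 2⁻¹) (by norm_num)
  have hZhalf0 := eventually_outageProb_const_mul_pos hZ he (k := 2⁻¹) (by norm_num)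
  refine (hYhalf.mul hZhalf hYhalf0 hZhalf0).of_le_of_le
    (hY.mul hZ hY0' hZ0') (hYhalf0.and hZhalf0 |>.mono fun _ h => mul_pos h.1 h.2)
    (.of_forall fun ε => outageProb_mul_le_outageProb_add hYZ (by linarith))
    (.of_forall (outageProb_add_le_mul hYZ hY0 hZ0))

noncomputable def harmonicSum (c : ℝ) (X Y Z : Ω → ℝ) (ω : Ω) : ℝ :=
  harmonicTerm c (X ω) (Y ω) + harmonicTerm c (X ω) (Z ω)

variable {X : Ω → ℝ} {c : ℝ}

lemma outageProb_le_outageProb_harmonicSum (hX0 : ∀ ω, 0 ≤ X ω) (hY0 : ∀ ω, 0 ≤ Y ω)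
    (hZ0 : ∀ ω, 0 ≤ Z ω) (hc : 0 < c) (ε : ℝ) :
    outageProb X (c / 2 * ε) ≤ outageProb (harmonicSum c X Y Z) ε := by
  refine outageProb_le_of_imp fun ω (hX : X ω < c / 2 * ε) => ?_
  have hXc : X ω / c < ε / 2 := by rw [div_lt_iff₀ hc]; linarith
  have hY := harmonicTerm_le_div hc (hX0 ω) (hY0 ω)
  have hZ := harmonicTerm_le_div hc (hX0 ω) (hZ0 ω)
  simp only [harmonicSum]
  linarith

lemma outageProb_add_le_outageProb_harmonicSum (hX0 : ∀ ω, 0 ≤ X ω) (hY0 : ∀ ω, 0 ≤ Y ω)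
    (hZ0 : ∀ ω, 0 ≤ Z ω) (hc : 0 ≤ c) (ε : ℝ) :
    outageProb (fun ω => Y ω + Z ω) ε ≤ outageProb (harmonicSum c X Y Z) ε := by
  refine outageProb_le_of_imp fun ω (hS : Y ω + Z ω < ε) => ?_
  have hY := harmonicTerm_le_right hc (hX0 ω) (hY0 ω)
  have hZ := harmonicTerm_le_right hc (hX0 ω) (hZ0 ω)
  simp only [harmonicSum]
  linarith

lemma outageProb_harmonicSum_le (hX0 : ∀ ω, 0 ≤ X ω) (hY0 : ∀ ω, 0 ≤ Y ω)
    (hZ0 : ∀ ω, 0 ≤ Z ω) (hYZ : IndepFun Y Z ℙ) (hc : 0 ≤ c) (ε : ℝ) :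
    outageProb (harmonicSum c X Y Z) ε ≤ outageProb X ((1 + c) * ε) +
      outageProb Y ((1 + c) * ε) * outageProb Z ((1 + c) * ε) := by
  have hsub : {ω | harmonicSum c X Y Z ω < ε} ⊆
      {ω | X ω < (1 + c) * ε} ∪ ({ω | Y ω < (1 + c) * ε} ∩ {ω | Z ω < (1 + c) * ε}) := by
    intro ω (hW : harmonicTerm c (X ω) (Y ω) + harmonicTerm c (X ω) (Z ω) < ε)
    have hsmall {V : Ω → ℝ} (hV0 : ∀ ω, 0 ≤ V ω) (hV : harmonicTerm c (X ω) (V ω) < ε) :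
        X ω < (1 + c) * ε ∨ V ω < (1 + c) * ε := by
      rw [← min_lt_iff, ← div_lt_iff₀' (by linarith)]
      exact (min_div_le_harmonicTerm hc (hX0 ω) (hV0 ω)).trans_lt hV
    have hY := hsmall hY0 (by linarith [harmonicTerm_nonneg hc (hX0 ω) (hZ0 ω)])
    have hZ := hsmall hZ0 (by linarith [harmonicTerm_nonneg hc (hX0 ω) (hY0 ω)])
    simp only [mem_union, mem_inter_iff, mem_ofPred_eq]
    tauto
  calc outageProb (harmonicSum c X Y Z) ε
      ≤ (ℙ : Measure Ω).real ({ω | X ω < (1 + c) * ε} ∪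
          ({ω | Y ω < (1 + c) * ε} ∩ {ω | Z ω < (1 + c) * ε})) := measureReal_mono hsub
    _ ≤ _ := measureReal_union_le _ _
    _ = _ := by rw [hYZ.measureReal_lt_inter_lt]; rfl

theorem DiversityGain.harmonicSum {d₁ d e : ℝ} (hX : DiversityGain X d₁)
    (hY : DiversityGain Y d) (hZ : DiversityGain Z e) (hd₁ : 0 < d₁) (hd : 0 < d) (he : 0 < e)
    (hYZ : IndepFun Y Z ℙ) (hX0 : ∀ ω, 0 ≤ X ω) (hY0 : ∀ ω, 0 ≤ Y ω) (hZ0 : ∀ ω, 0 ≤ Z ω)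
    (hc : 0 < c) :
    DiversityGain (harmonicSum c X Y Z) (min d₁ (d + e)) := by
  have hS := hY.add_of_indepFun hZ hd he hYZ hY0 hZ0
  rw [diversityGain_iff_hasLogOrder] at *
  have hk : 0 < 1 + c := by linarith
  have hS0 := hS.eventually_pos (add_pos hd he).ne' (outageProb_nonneg _)
  have hXk0 := eventually_outageProb_const_mul_pos hX hd₁ hk
  have hYk0 := eventually_outageProb_const_mul_pos hY hd hk
  have hZk0 := eventually_outageProb_const_mul_pos hZ he hk
  have hlower := (hX.comp_const_mul (half_pos hc)).max hS
    (eventually_outageProb_const_mul_pos hX hd₁ (half_pos hc)) hS0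
  have hupper := ((hX.comp_const_mul hk).max
    ((hY.comp_const_mul hk).mul (hZ.comp_const_mul hk) hYk0 hZk0) hXk0
    (hYk0.and hZk0 |>.mono fun _ h => mul_pos h.1 h.2)).const_mul two_pos
    (hXk0.mono fun _ h => h.trans_le (le_max_left _ _))
  exact hlower.of_le_of_le hupper (hS0.mono fun _ h => h.trans_le (le_max_right _ _))
    (.of_forall fun ε => max_le (outageProb_le_outageProb_harmonicSum hX0 hY0 hZ0 hc ε)
      (outageProb_add_le_outageProb_harmonicSum hX0 hY0 hZ0 hc.le ε))
    (.of_forall fun ε => (outageProb_harmonicSum_le hX0 hY0 hZ0 hYZ hc.le ε).trans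
      ((add_le_add (le_max_left _ _) (le_max_right _ _)).trans_eq (two_mul _).symm))

end outage

theorem sum_and_harmonic_mean_diversity_general
    {Ω : Type*} [MeasureSpace Ω] [IsProbabilityMeasure (ℙ : Measure Ω)]
    (X Y Z : Ω → ℝ)
    (hXpos : ∀ ω, 0 ≤ X ω) (hYpos : ∀ ω, 0 ≤ Y ω) (hZpos : ∀ ω, 0 ≤ Z ω)
    (hYZindep : IndepFun Y Z ℙ)
    (d d₁ : ℝ) (hd : 0 < d) (hd₁ : 0 < d₁)
    (hYd : OutageTheta Y d) (hZd : OutageTheta Z d)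
    (hXd : DiversityGain X d₁)
    (c : ℝ) (hc : 0 < c) :
    DiversityGain (fun ω => Y ω + Z ω) (2 * d) ∧
    DiversityGain
      (fun ω =>
        (if X ω + c * Y ω = 0 then 0 else X ω * Y ω / (X ω + c * Y ω)) +
        (if X ω + c * Z ω = 0 then 0 else X ω * Z ω / (X ω + c * Z ω)))
      (min d₁ (2 * d)) := by
  rw [two_mul]
  exact ⟨hYd.diversityGain.add_of_indepFun hZd.diversityGain hd hd hYZindep hYpos hZpos,
    hXd.harmonicSum hYd.diversityGain hZd.diversityGain hd₁ hd hd hYZindep hXpos hYpos hZpos hc⟩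

/-- If `Y, Z` are independent nonnegative random variables each with outage
probability `Θ(ε^d)`, then `Y + Z` has diversity gain `2d`; consequently, if
`X` has diversity gain `d₁` and is independent of `(Y, Z)`, then
`X Y/(X + c Y) + X Z/(X + c Z)` has diversity gain `min(d₁, 2d)`. -/
theorem sum_and_harmonic_mean_diversity
    {Ω : Type*} [MeasureSpace Ω] [IsProbabilityMeasure (ℙ : Measure Ω)]
    (X Y Z : Ω → ℝ) (hXm : Measurable X) (hYm : Measurable Y) (hZm : Measurable Z)
    (hXpos : ∀ ω, 0 ≤ X ω) (hYpos : ∀ ω, 0 ≤ Y ω) (hZpos : ∀ ω, 0 ≤ Z ω)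
    (hYZindep : IndepFun Y Z ℙ)
    (d d₁ : ℝ) (hd : 0 < d) (hd₁ : 0 < d₁)
    (hYd : OutageTheta Y d) (hZd : OutageTheta Z d)
    (hXd : DiversityGain X d₁)
    (hXYZ : IndepFun X (fun ω => (Y ω, Z ω)) ℙ)
    (c : ℝ) (hc : 0 < c) :
    DiversityGain (fun ω => Y ω + Z ω) (2 * d) ∧
    DiversityGain
      (fun ω =>
        (if X ω + c * Y ω = 0 then 0 else X ω * Y ω / (X ω + c * Y ω)) +
        (if X ω + c * Z ω = 0 then 0 else X ω * Z ω / (X ω + c * Z ω)))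
      (min d₁ (2 * d)) :=
  sum_and_harmonic_mean_diversity_general X Y Z hXpos hYpos hZpos hYZindep d d₁ hd hd₁ hYd hZd hXd c
    hc
end

section
/- Suppose random variables satisfy γ ≤ 2·g·F where g is Gamma(2N,1)-distributed, F is, conditional on an independent auxiliary variable, exponential(1)-distributed, and g, F are independent. Then P(γ < ε) ≥ α·ε + o(ε) for some constant α > 0, so the diversity gain of γ is at most 1. (Uses E[1/g] = 1/(2N−1) for g ~ Gamma(2N,1).) -/
/-!
Truncate `g`: pick `M > 0` with `c := P(g ≤ M) > 0`. For small `ε` put `s := ε / (4M)`; on the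
event `{g ≤ M, F ≤ s}` we have `γ ≤ 2 g F ≤ 2 M s = ε / 2 < ε`, and by independence this event has
probability `c (1 - e^{-s}) ≥ c s / 2`. So `P(γ < ε) ≥ α ε` with `α = c / (8M)`, whence
`log P(γ < ε) / log ε ≤ 1 + log α / log ε → 1`.
-/

open MeasureTheory ProbabilityTheory Filter Set Topology

lemma half_le_one_sub_exp_neg {s : ℝ} (hs₀ : 0 ≤ s) (hs₁ : s ≤ 1) :
    s / 2 ≤ 1 - Real.exp (-s) := by
  -- `e^{-s} ≤ 1 / (1 + s) ≤ 1 - s / 2` on `[0, 1]`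
  have hexp : s + 1 ≤ Real.exp s := Real.add_one_le_exp s
  have hinv : Real.exp (-s) * Real.exp s = 1 := by
    rw [← Real.exp_add, neg_add_cancel, Real.exp_zero]
  nlinarith [Real.exp_pos (-s)]

lemma half_le_expMeasure_real_Iic {s : ℝ} (hs₀ : 0 ≤ s) (hs₁ : s ≤ 1) :
    s / 2 ≤ (expMeasure 1).real (Iic s) := by
  have := isProbabilityMeasure_expMeasure (r := 1) one_pos
  rw [← cdf_eq_real, cdf_expMeasure_eq one_pos, if_pos hs₀, one_mul]
  exact half_le_one_sub_exp_neg hs₀ hs₁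

lemma ae_nonneg_expMeasure (r : ℝ) : ∀ᵐ x ∂expMeasure r, 0 ≤ x := by
  have hIio : expMeasure r (Iio 0) = 0 := by
    rw [expMeasure, gammaMeasure, withDensity_apply _ measurableSet_Iio]
    exact lintegral_gammaPDF_of_nonpos le_rfl
  rw [ae_iff]
  simp only [not_le]
  exact hIio

lemma exists_pos_measure_preimage_Iic {Ω : Type*} [MeasurableSpace Ω] (μ : Measure Ω) [NeZero μ]
    (g : Ω → ℝ) : ∃ M > 0, 0 < μ (g ⁻¹' Iic M) := by
  have hmono : Monotone fun M : ℝ ↦ g ⁻¹' Iic M := fun _ _ h ↦ preimage_mono (Iic_subset_Iic.2 h)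
  have hlim := tendsto_measure_iUnion_atTop (μ := μ) hmono
  rw [← preimage_iUnion, iUnion_Iic, preimage_univ] at hlim
  exact ((eventually_gt_atTop 0).and
    (hlim.eventually (lt_mem_nhds (NeZero.pos (μ univ))))).exists

theorem exists_linear_le_measureReal_lt_of_le_mul_exp {Ω : Type*} [MeasurableSpace Ω]
    {μ : Measure Ω} [IsProbabilityMeasure μ] {g F γ : Ω → ℝ} (hFm : Measurable F)
    (hF : μ.map F = expMeasure 1) (hgF : IndepFun g F μ)
    (hγle : ∀ᵐ ω ∂μ, γ ω ≤ 2 * g ω * F ω) :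
    ∃ α > 0, ∀ᶠ ε in 𝓝[>] 0, α * ε ≤ μ.real {ω | γ ω < ε} := by
  obtain ⟨M, hM, hgM⟩ := exists_pos_measure_preimage_Iic μ g
  set c := μ.real (g ⁻¹' Iic M)
  have hc : 0 < c := ENNReal.toReal_pos hgM.ne' (measure_ne_top _ _)
  have hFnn : ∀ᵐ ω ∂μ, 0 ≤ F ω := ae_of_ae_map hFm.aemeasurable (hF ▸ ae_nonneg_expMeasure 1)
  refine ⟨c / (8 * M), by positivity, ?_⟩
  filter_upwards [Ioo_mem_nhdsGT (show (0 : ℝ) < 4 * M by positivity)] with ε ⟨hε₀, hε⟩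
  set s := ε / (4 * M) with hs
  have hs₀ : 0 ≤ s := by positivity
  have hs₁ : s ≤ 1 := (div_le_one (by positivity)).2 hε.le
  have hevent : (g ⁻¹' Iic M ∩ F ⁻¹' Iic s : Set Ω) ≤ᵐ[μ] {ω | γ ω < ε} := by
    filter_upwards [hγle, hFnn] with ω hγ hF₀ ⟨hgω, hFω⟩
    have hgω : g ω ≤ M := hgω
    have hFω : F ω ≤ s := hFω
    calc γ ω ≤ 2 * g ω * F ω := hγ
      _ ≤ 2 * M * s := by gcongr
      _ = ε / 2 := by rw [hs]; field_simp; ring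
      _ < ε := half_lt_self hε₀
  have hFs : s / 2 ≤ μ.real (F ⁻¹' Iic s) := by
    rw [← map_measureReal_apply hFm measurableSet_Iic, hF]
    exact half_le_expMeasure_real_Iic hs₀ hs₁
  calc c / (8 * M) * ε = c * (s / 2) := by rw [hs]; field_simp; ring
    _ ≤ c * μ.real (F ⁻¹' Iic s) := by gcongr
    _ = μ.real (g ⁻¹' Iic M ∩ F ⁻¹' Iic s) := by
      simp only [measureReal_def, hgF.measure_inter_preimage_eq_mul _ _ measurableSet_Iic
        measurableSet_Iic, ENNReal.toReal_mul, c]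
    _ ≤ μ.real {ω | γ ω < ε} := ENNReal.toReal_mono (measure_ne_top _ _) (measure_mono_ae hevent)

lemma le_one_of_tendsto_log_div_log {f : ℝ → ℝ} {α d : ℝ} (hα : 0 < α)
    (hf : ∀ᶠ ε in 𝓝[>] 0, α * ε ≤ f ε)
    (hd : Tendsto (fun ε ↦ Real.log (f ε) / Real.log ε) (𝓝[>] 0) (𝓝 d)) : d ≤ 1 := by
  have hbound : Tendsto (fun ε ↦ Real.log α / Real.log ε + 1) (𝓝[>] 0) (𝓝 1) := by
    simpa using (Real.tendsto_log_nhdsGT_zero.const_div_atBot (Real.log α)).add_const 1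
  refine le_of_tendsto_of_tendsto hd hbound ?_
  filter_upwards [hf, Ioo_mem_nhdsGT one_pos] with ε hfε ⟨hε₀, hε₁⟩
  have hlog : Real.log ε < 0 := Real.log_neg hε₀ hε₁
  rw [div_add_one hlog.ne, div_le_div_right_of_neg hlog, ← Real.log_mul hα.ne' hε₀.ne']
  exact Real.log_le_log (by positivity) hfε

theorem diversity_upper_bound_one_general
    {Ω : Type*} [MeasureSpace Ω] [IsProbabilityMeasure (ℙ : Measure Ω)]
    (g F γ : Ω → ℝ) (hFm : Measurable F)
    (hF : Measure.map F ℙ = expMeasure 1)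
    (hgF : IndepFun g F ℙ)
    (hγle : ∀ᵐ ω ∂(ℙ : Measure Ω), γ ω ≤ 2 * g ω * F ω) :
    (∃ α : ℝ, 0 < α ∧ ∀ᶠ ε in nhdsWithin (0 : ℝ) (Ioi 0),
      α * ε ≤ (ℙ {ω | γ ω < ε}).toReal) ∧
    ∀ d : ℝ,
      Tendsto (fun ε : ℝ => Real.log ((ℙ {ω | γ ω < ε}).toReal) / Real.log ε)
        (nhdsWithin 0 (Ioi 0)) (nhds d) → d ≤ 1 := by
  obtain ⟨α, hα, hlinear⟩ := exists_linear_le_measureReal_lt_of_le_mul_exp hFm hF hgF hγle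
  exact ⟨⟨α, hα, hlinear⟩, fun d hd ↦ le_one_of_tendsto_log_div_log hα hlinear hd⟩

/-- Suppose `g ~ Gamma(2N, 1)`, `F ~ Exp(1)`, `g` and `F` independent, and `γ`
is a nonnegative random variable with `γ ≤ 2 g F` almost surely.  Then
`P(γ < ε) ≥ α ε + o(ε)` for some `α > 0` (indeed eventually `P(γ < ε) ≥ α ε`),
so the diversity gain of `γ` is at most `1`.
(Uses `E[1/g] = 1/(2N−1)` for `g ~ Gamma(2N,1)`.) -/
theorem diversity_upper_bound_one
    {Ω : Type*} [MeasureSpace Ω] [IsProbabilityMeasure (ℙ : Measure Ω)]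
    (N : ℕ) (hN : 1 ≤ N)
    (g F γ : Ω → ℝ) (hgm : Measurable g) (hFm : Measurable F) (hγm : Measurable γ)
    (hg : Measure.map g ℙ = gammaMeasure (2 * N) 1)
    (hF : Measure.map F ℙ = expMeasure 1)
    (hgF : IndepFun g F ℙ)
    (hγpos : ∀ ω, 0 ≤ γ ω)
    (hγle : ∀ᵐ ω ∂(ℙ : Measure Ω), γ ω ≤ 2 * g ω * F ω) :
    (∃ α : ℝ, 0 < α ∧ ∀ᶠ ε in nhdsWithin (0 : ℝ) (Ioi 0),
      α * ε ≤ (ℙ {ω | γ ω < ε}).toReal) ∧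
    ∀ d : ℝ,
      Tendsto (fun ε : ℝ => Real.log ((ℙ {ω | γ ω < ε}).toReal) / Real.log ε)
        (nhdsWithin 0 (Ioi 0)) (nhds d) → d ≤ 1 :=
  diversity_upper_bound_one_general g F γ hFm hF hgF hγle
end
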